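/- Let G, H, K and T be finite groups. For a bifree (G,H)-biset X, the assignment [μ] ↦ Σ_{[λ] ∈ Inj(T,G)/G} (|X^{Δ(λ(T), λ∘μ⁻¹, μ(T))}| / |C_G(λ(T))|) · [λ] gives a well-defined ℚ-linear map σ_T(X): ℚ[Inj(T,H)/H] → ℚ[Inj(T,G)/G] (independent of the chosen representatives λ and μ). Moreover, for every bifree (G,H)-biset X and every bifree (H,K)-biset Y one has σ_T(X ×_H Y) = σ_T(X) ∘ σ_T(Y). -/

import Mathlib

open scoped Classical

/-- Injective group homomorphisms `T → G`. -/
def InjHom (T G : Type*) [Group T] [Group G] := {f : T →* G // Function.Injective f}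

/-- The orbit relation for the `G`-action `g • λ = c_g ∘ λ` on `Inj(T,G)`;
its quotient is `Inj(T,G)/G = \overline{Inj}(T,G)`. -/
def injSetoid (T G : Type*) [Group T] [Group G] : Setoid (InjHom T G) where
  r f f' := ∃ g : G, (MulAut.conj g).toMonoidHom.comp f.1 = f'.1
  iseqv := by
    constructor
    · intro f; exact ⟨1, by ext x; simp⟩
    · rintro f f' ⟨g, h⟩
      refine ⟨g⁻¹, ?_⟩; ext x
      have hx : f'.1 x = g * f.1 x * g⁻¹ := by
        rw [← h]; simp [MulAut.conj_apply]
      simp only [MonoidHom.comp_apply, MulEquiv.coe_toMonoidHom, MulAut.conj_apply, hx]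
      group
    · rintro f f' f'' ⟨g, h⟩ ⟨g', h'⟩
      refine ⟨g' * g, ?_⟩; ext x
      have hx : f'.1 x = g * f.1 x * g⁻¹ := by
        rw [← h]; simp [MulAut.conj_apply]
      have hx' : f''.1 x = g' * f'.1 x * g'⁻¹ := by
        rw [← h']; simp [MulAut.conj_apply]
      simp only [MonoidHom.comp_apply, MulEquiv.coe_toMonoidHom, MulAut.conj_apply, hx', hx]
      group
/-- The `H`-orbit relation on `X × Y` whose quotient is the tensor product
`X ×_H Y` of a `(G,H)`-biset `X` and an `(H,K)`-biset `Y`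
(`h • (x,y) = (x h⁻¹, h y)`, i.e. `((1,h) • x, (h,1) • y)`). -/
def tensSetoid (G H K X Y : Type*) [Group G] [Group H] [Group K]
    [MulAction (G × H) X] [MulAction (H × K) Y] : Setoid (X × Y) where
  r a b := ∃ h : H, ((((1 : G), h) : G × H) • a.1, ((h, (1 : K)) : H × K) • a.2) = b
  iseqv := by
    constructor
    · intro a; exact ⟨1, Prod.ext (one_smul _ _) (one_smul _ _)⟩
    · rintro a b ⟨h, rfl⟩
      exact ⟨h⁻¹, by simp [smul_smul]; exact Prod.ext (one_smul _ _) (one_smul _ _)⟩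
    · rintro a b c ⟨h, rfl⟩ ⟨h', rfl⟩
      exact ⟨h' * h, by simp [smul_smul]⟩

/-- The matrix entry of `σ_T(X)` at injective homomorphisms `λ : T → G`,
`μ : T → H`:  `|X^{Δ(λ(T),λμ⁻¹,μ(T))}| / |C_G(λ(T))|`.  (Note
`Δ(λ(T),λμ⁻¹,μ(T)) = {(λ t, μ t) : t ∈ T}`.) -/
noncomputable def entryX {T G H : Type*} [Group T] [Group G] [Group H]
    (X : Type*) [MulAction (G × H) X] (l : InjHom T G) (m : InjHom T H) : ℚ :=
  (Nat.card {x : X | ∀ t : T, ((l.1 t, m.1 t) : G × H) • x = x} : ℚ) /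
    (Nat.card ↥(Subgroup.centralizer ((l.1.range : Subgroup G) : Set G)) : ℚ)

/-- The matrix entry of `σ_T(X ×_H Y)`, with `X ×_H Y` realized as the quotient
of `X × Y` by `tensSetoid` and `(g,k) • [x,y] = [(g,1) • x, (1,k) • y]`. -/
noncomputable def entryXY (T : Type*) {G : Type*} (H : Type*) {K : Type*}
    [Group T] [Group G] [Group H] [Group K]
    (X Y : Type*) [MulAction (G × H) X] [MulAction (H × K) Y]
    (l : InjHom T G) (n : InjHom T K) : ℚ :=
  (Nat.card {q : Quotient (tensSetoid G H K X Y) |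
      ∀ (t : T) (x : X) (y : Y), Quotient.mk (tensSetoid G H K X Y) (x, y) = q →
        Quotient.mk (tensSetoid G H K X Y)
          (((l.1 t, (1 : H)) : G × H) • x, (((1 : H), n.1 t) : H × K) • y) = q} : ℚ) /
    (Nat.card ↥(Subgroup.centralizer ((l.1.range : Subgroup G) : Set G)) : ℚ)

/-!
A class `[x, y]` of `X ×_H Y` is fixed by `Δ(λ, ν)` exactly when for every `t` some `h_t ∈ H`
satisfies `(λ t, h_t) • x = x` and `(h_t, ν t) • y = y`. Bifreeness of `X` makes `h_t` unique and
`t ↦ h_t` an injective homomorphism `μ`, so the pairs lying over fixed classes form the disjoint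
union over `μ ∈ Inj(T,H)` of `X^{Δ(λ,μ)} × Y^{Δ(μ,ν)}`, and, `H` acting freely on `X × Y`, every
fixed class has exactly `|H|` preimages. Grouping the `μ` into `H`-orbits, of size
`|H| / |C_H(μ(T))|` by orbit–stabilizer (the stabilizer of `μ` is the centralizer of `μ(T)`),
turns this count into the matrix product. Invariance under conjugation holds because conjugating
`λ` and `μ` moves the fixed points and the centralizer by a bijection.
-/

open MulAction

lemma card_fixed_conj {M α T : Type*} [Group M] [MulAction M α] (s : T → M) (c : M) :
    Nat.card {x : α | ∀ t, (c * s t * c⁻¹) • x = x} = Nat.card {x : α | ∀ t, s t • x = x} :=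
  Nat.card_congr (Equiv.subtypeEquiv (MulAction.toPerm c) fun x => by
    simp [mul_smul]).symm

namespace InjHom

variable {T G : Type*} [Group T] [Group G]

lemma val_injective : Function.Injective (Subtype.val : InjHom T G → T →* G) :=
  Subtype.val_injective

instance : MulAction G (InjHom T G) where
  smul g f := ⟨(MulAut.conj g).toMonoidHom.comp f.1, (MulAut.conj g).injective.comp f.2⟩
  one_smul f := val_injective <| MonoidHom.ext fun t => by
    show 1 * f.1 t * 1⁻¹ = f.1 t
    rw [one_mul, inv_one, mul_one]
  mul_smul g g' f := val_injective <| MonoidHom.ext fun t => by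
    show g * g' * f.1 t * (g * g')⁻¹ = g * (g' * f.1 t * g'⁻¹) * g⁻¹
    simp only [mul_assoc, mul_inv_rev]

instance [Finite T] [Finite G] : Finite (InjHom T G) :=
  .of_injective (fun f : InjHom T G => (f.1 : T → G)) fun _ _ h =>
    val_injective (DFunLike.coe_injective h)

lemma smul_apply (g : G) (f : InjHom T G) (t : T) : (g • f).1 t = g * f.1 t * g⁻¹ := rfl

lemma injSetoid_r_iff {f f' : InjHom T G} : (injSetoid T G).r f f' ↔ ∃ g : G, g • f = f' :=
  exists_congr fun g => val_injective.eq_iff (a := g • f) (b := f')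

lemma mk_eq_iff_mem_orbit {f : InjHom T G} {j : Quotient (injSetoid T G)} :
    Quotient.mk _ f = j ↔ f ∈ orbit G j.out := by
  conv_lhs => rw [← j.out_eq]
  rw [Quotient.eq, mem_orbit_symm]
  exact injSetoid_r_iff

lemma stabilizer_eq_centralizer_range (f : InjHom T G) :
    stabilizer G f = Subgroup.centralizer (f.1.range : Set G) := by
  ext g
  rw [mem_stabilizer_iff, Subgroup.mem_centralizer_iff]
  refine (val_injective.eq_iff (a := g • f) (b := f)).symm.trans ?_
  rw [MonoidHom.ext_iff]
  simp only [SetLike.mem_coe, MonoidHom.mem_range, forall_exists_index, forall_apply_eq_imp_iff,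
    smul_apply]
  exact forall_congr' fun t => by rw [mul_inv_eq_iff_eq_mul, eq_comm]

lemma card_centralizer_range_eq_of_rel {f f' : InjHom T G} (h : (injSetoid T G).r f f') :
    Nat.card (Subgroup.centralizer (f'.1.range : Set G)) =
      Nat.card (Subgroup.centralizer (f.1.range : Set G)) := by
  obtain ⟨g, rfl⟩ := injSetoid_r_iff.1 h
  rw [← stabilizer_eq_centralizer_range, ← stabilizer_eq_centralizer_range]
  exact Nat.card_congr (stabilizerEquivStabilizer rfl).toEquiv.symm

lemma card_fiber_mul_card_centralizer (j : Quotient (injSetoid T G)) :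
    Nat.card {f // Quotient.mk _ f = j} * Nat.card (Subgroup.centralizer (j.out.1.range : Set G)) =
      Nat.card G := by
  rw [← stabilizer_eq_centralizer_range, Nat.card_congr (Equiv.subtypeEquivRight
    fun _ => mk_eq_iff_mem_orbit), ← Nat.card_prod]
  exact Nat.card_congr (orbitProdStabilizerEquivGroup G j.out)

lemma sum_eq_sum_quotient [Finite G] [Fintype (InjHom T G)] [Fintype (Quotient (injSetoid T G))]
    (φ : InjHom T G → ℚ) (hφ : ∀ f f', (injSetoid T G).r f f' → φ f = φ f') :
    ∑ f, φ f = ∑ j : Quotient (injSetoid T G),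
      Nat.card G / Nat.card (Subgroup.centralizer (j.out.1.range : Set G)) * φ j.out := by
  rw [← Fintype.sum_fiberwise (Quotient.mk (injSetoid T G)) φ]
  refine Finset.sum_congr rfl fun j _ => ?_
  rw [Finset.sum_congr rfl fun (f : {f // Quotient.mk _ f = j}) _ =>
      hφ f j.out (Quotient.exact (f.2.trans j.out_eq.symm)),
    Finset.sum_const, Finset.card_univ, nsmul_eq_mul, ← Nat.card_eq_fintype_card,
    ← card_fiber_mul_card_centralizer j, Nat.cast_mul, mul_div_cancel_right₀]
  exact Nat.cast_ne_zero.2 Nat.card_pos.ne'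

end InjHom

section Biset

variable {T G H : Type*} [Group T] [Group G] [Group H] {X : Type*} [MulAction (G × H) X]

lemma card_fixed_eq_of_rel {l l' : InjHom T G} {m m' : InjHom T H}
    (hl : (injSetoid T G).r l l') (hm : (injSetoid T H).r m m') :
    Nat.card {x : X | ∀ t, ((l'.1 t, m'.1 t) : G × H) • x = x} =
      Nat.card {x : X | ∀ t, ((l.1 t, m.1 t) : G × H) • x = x} := by
  obtain ⟨g, rfl⟩ := InjHom.injSetoid_r_iff.1 hl
  obtain ⟨h, rfl⟩ := InjHom.injSetoid_r_iff.1 hm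
  exact card_fixed_conj (fun t => ((l.1 t, m.1 t) : G × H)) (g, h)

lemma entryX_eq_of_rel {l l' : InjHom T G} {m m' : InjHom T H}
    (hl : (injSetoid T G).r l l') (hm : (injSetoid T H).r m m') :
    entryX X l m = entryX X l' m' := by
  rw [entryX, entryX, card_fixed_eq_of_rel hl hm, InjHom.card_centralizer_range_eq_of_rel hl]

lemma snd_eq_of_smul_eq_smul (hfree : ∀ (x : X) (h : H), (((1 : G), h) : G × H) • x = x → h = 1)
    {a b : G × H} {x : X} (hab : a • x = b • x) (h1 : a.1 = b.1) : a.2 = b.2 := by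
  have hfix : (((1 : G), b.2⁻¹ * a.2) : G × H) • x = x := by
    have : ((1 : G), b.2⁻¹ * a.2) = b⁻¹ * a := Prod.ext (by simp [h1]) rfl
    rw [this, mul_smul, hab, inv_smul_smul]
  exact (inv_mul_eq_one.1 (hfree x _ hfix)).symm

lemma InjHom.eq_of_forall_smul_eq
    (hfree : ∀ (x : X) (h : H), (((1 : G), h) : G × H) • x = x → h = 1)
    {l : InjHom T G} {μ μ' : InjHom T H} {x : X}
    (h : ∀ t, ((l.1 t, μ.1 t) : G × H) • x = x) (h' : ∀ t, ((l.1 t, μ'.1 t) : G × H) • x = x) :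
    μ = μ' :=
  InjHom.val_injective <| MonoidHom.ext fun t =>
    snd_eq_of_smul_eq_smul hfree ((h t).trans (h' t).symm) rfl

lemma InjHom.exists_eq_of_forall_smul_eq
    (hfreeL : ∀ (x : X) (g : G), ((g, (1 : H)) : G × H) • x = x → g = 1)
    (hfreeR : ∀ (x : X) (h : H), (((1 : G), h) : G × H) • x = x → h = 1)
    {l : InjHom T G} {x : X} {F : T → H} (hF : ∀ t, ((l.1 t, F t) : G × H) • x = x) :
    ∃ μ : InjHom T H, ⇑μ.1 = F := by
  have hmul : ∀ s t, F (s * t) = F s * F t := fun s t =>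
    snd_eq_of_smul_eq_smul hfreeR (a := (l.1 (s * t), F (s * t)))
      (b := ((l.1 s, F s) : G × H) * (l.1 t, F t)) (by rw [hF, mul_smul, hF, hF]) (map_mul _ _ _)
  refine ⟨⟨MonoidHom.mk' F hmul, (injective_iff_map_eq_one _).2 fun t ht => ?_⟩, rfl⟩
  replace ht : F t = 1 := ht
  exact (injective_iff_map_eq_one _).1 l.2 t (hfreeL x _ (ht ▸ hF t))

end Biset

namespace tensSetoid

variable {T G H K X Y : Type*} [Group T] [Group G] [Group H] [Group K]
  [MulAction (G × H) X] [MulAction (H × K) Y]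

instance : MulAction (G × K) (Quotient (tensSetoid G H K X Y)) where
  smul a := Quotient.map (fun p => (((a.1, (1 : H)) : G × H) • p.1, (((1 : H), a.2) : H × K) • p.2))
    (by
      rintro p _ ⟨h, rfl⟩
      exact ⟨h, by simp only [smul_smul, Prod.mk_mul_mk, one_mul, mul_one]⟩)
  one_smul q := q.inductionOn fun p => by
    show Quotient.mk _ (((1 : G × H)) • p.1, ((1 : H × K)) • p.2) = _
    rw [one_smul, one_smul]
  mul_smul a b q := q.inductionOn fun p => by
    show Quotient.mk _ (_, _) = Quotient.mk _ (_, _)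
    simp only [smul_smul, Prod.mk_mul_mk, mul_one, Prod.fst_mul, Prod.snd_mul]

lemma smul_mk (g : G) (k : K) (x : X) (y : Y) :
    ((g, k) : G × K) • Quotient.mk (tensSetoid G H K X Y) (x, y) =
      Quotient.mk _ (((g, (1 : H)) : G × H) • x, (((1 : H), k) : H × K) • y) := rfl

lemma smul_mk_eq_mk_iff (g : G) (k : K) (p : X × Y) :
    ((g, k) : G × K) • Quotient.mk (tensSetoid G H K X Y) p = Quotient.mk _ p ↔
      ∃ h : H, ((g, h) : G × H) • p.1 = p.1 ∧ ((h, k) : H × K) • p.2 = p.2 := by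
  rw [smul_mk, Quotient.eq]
  refine exists_congr fun h => ?_
  simp only [smul_smul, Prod.mk_mul_mk, one_mul, mul_one, Prod.ext_iff]

variable (G K) in
def midSMul (h : H) (p : X × Y) : X × Y :=
  ((((1 : G), h) : G × H) • p.1, ((h, (1 : K)) : H × K) • p.2)

lemma mk_midSMul (h : H) (p : X × Y) :
    Quotient.mk (tensSetoid G H K X Y) (midSMul G K h p) = Quotient.mk _ p :=
  (Quotient.eq.2 (show (tensSetoid G H K X Y).r p (midSMul G K h p) from ⟨h, rfl⟩)).symm

lemma card_preimage_mk (hfree : ∀ (x : X) (h : H), (((1 : G), h) : G × H) • x = x → h = 1)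
    (S : Set (Quotient (tensSetoid G H K X Y))) :
    Nat.card {p : X × Y // Quotient.mk _ p ∈ S} = Nat.card S * Nat.card H := by
  rw [← Nat.card_prod]
  refine (Nat.card_congr (Equiv.ofBijective (fun a : S × H =>
    ⟨midSMul G K a.2 a.1.1.out, by rw [mk_midSMul, Quotient.out_eq]; exact a.1.2⟩) ⟨?_, ?_⟩)).symm
  · rintro ⟨⟨q, hq⟩, h⟩ ⟨⟨q', hq'⟩, h'⟩ he
    have he' : midSMul G K h q.out = midSMul G K h' q'.out := congrArg Subtype.val he
    obtain rfl : q = q' := by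
      have := congrArg (Quotient.mk (tensSetoid G H K X Y)) he'
      rwa [mk_midSMul, mk_midSMul, Quotient.out_eq, Quotient.out_eq] at this
    obtain rfl : h = h' := snd_eq_of_smul_eq_smul hfree (a := ((1 : G), h)) (b := ((1 : G), h'))
      (congrArg Prod.fst he') rfl
    rfl
  · rintro ⟨p, hp⟩
    obtain ⟨h, hh⟩ := Quotient.exact (Quotient.out_eq (Quotient.mk (tensSetoid G H K X Y) p))
    exact ⟨(⟨_, hp⟩, h), Subtype.ext hh⟩

lemma forall_smul_mk_eq_mk_iff
    (hfreeL : ∀ (x : X) (g : G), ((g, (1 : H)) : G × H) • x = x → g = 1)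
    (hfreeR : ∀ (x : X) (h : H), (((1 : G), h) : G × H) • x = x → h = 1)
    (l : InjHom T G) (n : InjHom T K) (p : X × Y) :
    (∀ t, ((l.1 t, n.1 t) : G × K) • Quotient.mk (tensSetoid G H K X Y) p = Quotient.mk _ p) ↔
      ∃ μ : InjHom T H, (∀ t, ((l.1 t, μ.1 t) : G × H) • p.1 = p.1) ∧
        ∀ t, ((μ.1 t, n.1 t) : H × K) • p.2 = p.2 := by
  simp only [smul_mk_eq_mk_iff]
  refine ⟨fun hp => ?_, fun ⟨μ, h1, h2⟩ t => ⟨μ.1 t, h1 t, h2 t⟩⟩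
  choose F hF1 hF2 using hp
  obtain ⟨μ, rfl⟩ := InjHom.exists_eq_of_forall_smul_eq hfreeL hfreeR hF1
  exact ⟨μ, hF1, hF2⟩

lemma card_fixed_mul_card [Finite X] [Finite Y] [Fintype (InjHom T H)]
    (hfreeL : ∀ (x : X) (g : G), ((g, (1 : H)) : G × H) • x = x → g = 1)
    (hfreeR : ∀ (x : X) (h : H), (((1 : G), h) : G × H) • x = x → h = 1)
    (l : InjHom T G) (n : InjHom T K) :
    Nat.card {q : Quotient (tensSetoid G H K X Y) | ∀ t, ((l.1 t, n.1 t) : G × K) • q = q} *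
        Nat.card H =
      ∑ μ : InjHom T H, Nat.card {x : X | ∀ t, ((l.1 t, μ.1 t) : G × H) • x = x} *
        Nat.card {y : Y | ∀ t, ((μ.1 t, n.1 t) : H × K) • y = y} := by
  simp_rw [← card_preimage_mk hfreeR, ← Nat.card_prod]
  rw [← Nat.card_sigma]
  refine (Nat.card_congr (Equiv.ofBijective (fun s => ⟨(s.2.1.1, s.2.2.1),
    (forall_smul_mk_eq_mk_iff hfreeL hfreeR l n _).2 ⟨s.1, s.2.1.2, s.2.2.2⟩⟩) ⟨?_, ?_⟩)).symm
  · rintro ⟨μ, ⟨x, hx⟩, ⟨y, hy⟩⟩ ⟨μ', ⟨x', hx'⟩, ⟨y', hy'⟩⟩ he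
    obtain ⟨rfl, rfl⟩ : x = x' ∧ y = y' := Prod.ext_iff.1 (congrArg Subtype.val he)
    obtain rfl := InjHom.eq_of_forall_smul_eq hfreeR hx hx'
    rfl
  · rintro ⟨p, hp⟩
    obtain ⟨μ, h1, h2⟩ := (forall_smul_mk_eq_mk_iff hfreeL hfreeR l n p).1 hp
    exact ⟨⟨μ, ⟨p.1, h1⟩, ⟨p.2, h2⟩⟩, rfl⟩

end tensSetoid

lemma entryXY_eq_entryX {T G H K X Y : Type*} [Group T] [Group G] [Group H] [Group K]
    [MulAction (G × H) X] [MulAction (H × K) Y] (l : InjHom T G) (n : InjHom T K) :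
    entryXY T H X Y l n = entryX (Quotient (tensSetoid G H K X Y)) l n := by
  rw [entryXY, entryX]
  congr 4
  ext q
  refine ⟨fun hq t => ?_, fun hq t x y hxy => ?_⟩
  · induction q using Quotient.ind
    exact hq t _ _ rfl
  · subst hxy
    exact hq t

theorem entryX_tensor_eq_sum {T G H K X Y : Type*} [Group T] [Group G] [Group H] [Group K]
    [MulAction (G × H) X] [MulAction (H × K) Y] [Finite T] [Finite G] [Finite H] [Finite X]
    [Finite Y] [Fintype (Quotient (injSetoid T H))]
    (hfreeL : ∀ (x : X) (g : G), ((g, (1 : H)) : G × H) • x = x → g = 1)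
    (hfreeR : ∀ (x : X) (h : H), (((1 : G), h) : G × H) • x = x → h = 1)
    (l : InjHom T G) (n : InjHom T K) :
    entryX (Quotient (tensSetoid G H K X Y)) l n =
      ∑ j : Quotient (injSetoid T H), entryX X l j.out * entryX Y j.out n := by
  have := Fintype.ofFinite (InjHom T H)
  set A : InjHom T H → ℚ := fun μ => Nat.card {x : X | ∀ t, ((l.1 t, μ.1 t) : G × H) • x = x}
  set B : InjHom T H → ℚ := fun μ => Nat.card {y : Y | ∀ t, ((μ.1 t, n.1 t) : H × K) • y = y}
  set cG : ℚ := (Nat.card (Subgroup.centralizer (l.1.range : Set G)) : ℚ)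
  have hcount : (Nat.card {q : Quotient (tensSetoid G H K X Y) |
      ∀ t, ((l.1 t, n.1 t) : G × K) • q = q} : ℚ) * Nat.card H = ∑ μ, A μ * B μ := by
    simpa only [Nat.cast_mul, Nat.cast_sum] using
      congrArg (Nat.cast : ℕ → ℚ) (tensSetoid.card_fixed_mul_card (Y := Y) hfreeL hfreeR l n)
  have hsum := InjHom.sum_eq_sum_quotient (fun μ => A μ * B μ) fun μ μ' h => by
    simp only [A, B, card_fixed_eq_of_rel ((injSetoid T G).iseqv.refl l) h,
      card_fixed_eq_of_rel h ((injSetoid T K).iseqv.refl n)]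
  have hH : (Nat.card H : ℚ) ≠ 0 := Nat.cast_ne_zero.2 Nat.card_pos.ne'
  have hcG : cG ≠ 0 := Nat.cast_ne_zero.2 Nat.card_pos.ne'
  calc entryX (Quotient (tensSetoid G H K X Y)) l n
      = (Nat.card {q : Quotient (tensSetoid G H K X Y) |
          ∀ t, ((l.1 t, n.1 t) : G × K) • q = q} : ℚ) * Nat.card H / (cG * Nat.card H) := by
        rw [mul_div_mul_right _ _ hH]; rfl
    _ = ∑ j : Quotient (injSetoid T H), Nat.card H /
          Nat.card (Subgroup.centralizer (j.out.1.range : Set H)) * (A j.out * B j.out) /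
            (cG * Nat.card H) := by
        rw [hcount, hsum, Finset.sum_div]
    _ = ∑ j : Quotient (injSetoid T H), entryX X l j.out * entryX Y j.out n := by
      refine Finset.sum_congr rfl fun j _ => ?_
      have hcH : (Nat.card (Subgroup.centralizer (j.out.1.range : Set H)) : ℚ) ≠ 0 :=
        Nat.cast_ne_zero.2 Nat.card_pos.ne'
      show _ = A j.out / cG * (B j.out / _)
      field_simp

theorem stmt12_general {T G H K : Type*} [Group T] [Group G] [Group H] [Group K]
    [Finite T] [Finite G] [Finite H] [Finite K]
    (X Y : Type*) [Finite X] [Finite Y] [MulAction (G × H) X] [MulAction (H × K) Y]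
    (hX1 : ∀ (x : X) (g : G), ((g, (1 : H)) : G × H) • x = x → g = 1)
    (hX2 : ∀ (x : X) (h : H), (((1 : G), h) : G × H) • x = x → h = 1) :
    -- σ_T(X) is well defined on orbit classes
    (∀ (l l' : InjHom T G) (m m' : InjHom T H),
      (injSetoid T G).r l l' → (injSetoid T H).r m m' →
        entryX X l m = entryX X l' m') ∧
    -- σ_T(Y) is well defined on orbit classes
    (∀ (m m' : InjHom T H) (n n' : InjHom T K),
      (injSetoid T H).r m m' → (injSetoid T K).r n n' →
        entryX Y m n = entryX Y m' n') ∧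
    -- σ_T(X ×_H Y) is well defined on orbit classes
    (∀ (l l' : InjHom T G) (n n' : InjHom T K),
      (injSetoid T G).r l l' → (injSetoid T K).r n n' →
        entryXY T H X Y l n = entryXY T H X Y l' n') ∧
    -- σ_T(X ×_H Y) = σ_T(X) ∘ σ_T(Y)
    (∀ (c : Quotient (injSetoid T K) → ℚ) (i : Quotient (injSetoid T G)),
      ∑ᶠ k : Quotient (injSetoid T K), entryXY T H X Y i.out k.out * c k =
      ∑ᶠ j : Quotient (injSetoid T H),
        entryX X i.out j.out *
          ∑ᶠ k : Quotient (injSetoid T K), entryX Y j.out k.out * c k) := by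
  refine ⟨fun _ _ _ _ => entryX_eq_of_rel, fun _ _ _ _ => entryX_eq_of_rel,
    fun _ _ _ _ hl hn => ?_, fun c i => ?_⟩
  · simpa only [entryXY_eq_entryX] using entryX_eq_of_rel hl hn
  · have := Fintype.ofFinite (Quotient (injSetoid T H))
    have := Fintype.ofFinite (Quotient (injSetoid T K))
    simp only [finsum_eq_sum_of_fintype, entryXY_eq_entryX, entryX_tensor_eq_sum hX1 hX2,
      Finset.sum_mul, Finset.mul_sum, mul_assoc]
    exact Finset.sum_comm

/-- for bifree bisets `X` (a `(G,H)`-biset) and `Y`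
(an `(H,K)`-biset), the entries of `σ_T` are constant on orbits of injective
homomorphisms (so `σ_T(X)`, `σ_T(Y)` and `σ_T(X ×_H Y)` are well defined as
linear maps `ℚ[Inj(T,·)/·] → ℚ[Inj(T,·)/·]`), and
`σ_T(X ×_H Y) = σ_T(X) ∘ σ_T(Y)`. -/
theorem stmt12 {T G H K : Type*} [Group T] [Group G] [Group H] [Group K]
    [Finite T] [Finite G] [Finite H] [Finite K]
    (X Y : Type*) [Finite X] [Finite Y] [MulAction (G × H) X] [MulAction (H × K) Y]
    (hX1 : ∀ (x : X) (g : G), ((g, (1 : H)) : G × H) • x = x → g = 1)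
    (hX2 : ∀ (x : X) (h : H), (((1 : G), h) : G × H) • x = x → h = 1)
    (hY1 : ∀ (y : Y) (h : H), ((h, (1 : K)) : H × K) • y = y → h = 1)
    (hY2 : ∀ (y : Y) (k : K), (((1 : H), k) : H × K) • y = y → k = 1) :
    -- σ_T(X) is well defined on orbit classes
    (∀ (l l' : InjHom T G) (m m' : InjHom T H),
      (injSetoid T G).r l l' → (injSetoid T H).r m m' →
        entryX X l m = entryX X l' m') ∧
    -- σ_T(Y) is well defined on orbit classes
    (∀ (m m' : InjHom T H) (n n' : InjHom T K),
      (injSetoid T H).r m m' → (injSetoid T K).r n n' →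
        entryX Y m n = entryX Y m' n') ∧
    -- σ_T(X ×_H Y) is well defined on orbit classes
    (∀ (l l' : InjHom T G) (n n' : InjHom T K),
      (injSetoid T G).r l l' → (injSetoid T K).r n n' →
        entryXY T H X Y l n = entryXY T H X Y l' n') ∧
    -- σ_T(X ×_H Y) = σ_T(X) ∘ σ_T(Y)
    (∀ (c : Quotient (injSetoid T K) → ℚ) (i : Quotient (injSetoid T G)),
      ∑ᶠ k : Quotient (injSetoid T K), entryXY T H X Y i.out k.out * c k =
      ∑ᶠ j : Quotient (injSetoid T H),
        entryX X i.out j.out *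
          ∑ᶠ k : Quotient (injSetoid T K), entryX Y j.out k.out * c k) :=
  stmt12_general X Y hX1 hX2
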